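/- With P'(t,q) ∈ ℚ[[t,q]] as above and coefficients d_{a,b}, one has d_{a,b} = d_{a+4, b+6} for all a ≥ 45 and all b. -/

import Mathlib

open MvPowerSeries

noncomputable def tVar : MvPowerSeries (Fin 2) ℚ := MvPowerSeries.X 0
noncomputable def qVar : MvPowerSeries (Fin 2) ℚ := MvPowerSeries.X 1

noncomputable def GORNum : MvPowerSeries (Fin 2) ℚ :=
  (1 + qVar ^ 2) * (1 + tVar ^ 2 * qVar ^ 4) * (1 + tVar ^ 3 * qVar ^ 6) *
    (1 + tVar ^ 7 * qVar ^ 10)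

noncomputable def cf (a b : ℕ) (P : MvPowerSeries (Fin 2) ℚ) : ℚ :=
  MvPowerSeries.coeff (Finsupp.single (0 : Fin 2) a + Finsupp.single (1 : Fin 2) b) P

/-!
The right-hand side `GORNum * ∑_{i<7} (t⁶q⁸)ⁱ` has `t`-degree at most `12 + 36 = 48`, and the
coefficient of `t^(a+4) q^(b+6)` in `P' * (1 - t⁴q⁶)` is `d_{a+4,b+6} - d_{a,b}`. Hence the two
coefficients agree as soon as `a + 4 > 48`.
-/

namespace MvPowerSeries

variable {σ R : Type*}

section Semiring

variable [CommSemiring R] {i : σ} {m n : ℕ} {f g : MvPowerSeries σ R}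

def DegreeOfLE (i : σ) (n : ℕ) (f : MvPowerSeries σ R) : Prop :=
  ∀ ν : σ →₀ ℕ, n < ν i → coeff ν f = 0

theorem DegreeOfLE.mono (hf : DegreeOfLE i m f) (hmn : m ≤ n) : DegreeOfLE i n f :=
  fun ν hν => hf ν (hmn.trans_lt hν)

theorem DegreeOfLE.add (hf : DegreeOfLE i n f) (hg : DegreeOfLE i n g) :
    DegreeOfLE i n (f + g) := fun ν hν => by
  rw [map_add, hf ν hν, hg ν hν, add_zero]

theorem degreeOfLE_sum {ι : Type*} {s : Finset ι} {F : ι → MvPowerSeries σ R}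
    (hF : ∀ k ∈ s, DegreeOfLE i n (F k)) : DegreeOfLE i n (∑ k ∈ s, F k) := fun ν hν => by
  rw [map_sum]
  exact Finset.sum_eq_zero fun k hk => hF k hk ν hν

theorem DegreeOfLE.mul (hf : DegreeOfLE i m f) (hg : DegreeOfLE i n g) :
    DegreeOfLE i (m + n) (f * g) := fun ν hν => by
  classical
  rw [coeff_mul]
  refine Finset.sum_eq_zero fun p hp => ?_
  have hsum : p.1 i + p.2 i = ν i := by
    rw [← Finsupp.add_apply, Finset.HasAntidiagonal.mem_antidiagonal.mp hp]
  rcases lt_or_ge m (p.1 i) with h | h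
  · rw [hf p.1 h, zero_mul]
  · rw [hg p.2 (by omega), mul_zero]

theorem degreeOfLE_monomial (ν : σ →₀ ℕ) (c : R) : DegreeOfLE i (ν i) (monomial ν c) :=
  fun μ hμ => by
  classical
  rw [coeff_monomial, if_neg]
  rintro rfl
  exact hμ.false

theorem degreeOfLE_one : DegreeOfLE i 0 (1 : MvPowerSeries σ R) := by
  simpa using degreeOfLE_monomial (i := i) (0 : σ →₀ ℕ) (1 : R)

theorem degreeOfLE_X_pow_self (k : ℕ) : DegreeOfLE i k (X i ^ k : MvPowerSeries σ R) := by
  simpa [X_pow_eq] using degreeOfLE_monomial (R := R) (i := i) (Finsupp.single i k) 1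

theorem degreeOfLE_X_pow_of_ne {j : σ} (hji : j ≠ i) (k : ℕ) :
    DegreeOfLE i 0 (X j ^ k : MvPowerSeries σ R) := by
  simpa [X_pow_eq, Finsupp.single_apply, hji] using
    degreeOfLE_monomial (R := R) (i := i) (Finsupp.single j k) 1

theorem DegreeOfLE.pow (hf : DegreeOfLE i m f) (k : ℕ) : DegreeOfLE i (m * k) (f ^ k) := by
  induction k with
  | zero => simpa using degreeOfLE_one
  | succ k ih => simpa [pow_succ, Nat.mul_succ] using ih.mul hf

end Semiring

theorem coeff_add_mul_one_sub_monomial [CommRing R] (f : MvPowerSeries σ R) (ν μ : σ →₀ ℕ) :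
    coeff (ν + μ) (f * (1 - monomial μ 1)) = coeff (ν + μ) f - coeff ν f := by
  rw [mul_sub, mul_one, map_sub, coeff_add_mul_monomial, mul_one]

theorem coeff_add_eq_of_degreeOfLE_mul_one_sub_monomial [CommRing R] {i : σ} {n : ℕ}
    {f : MvPowerSeries σ R} {μ : σ →₀ ℕ} (h : DegreeOfLE i n (f * (1 - monomial μ 1)))
    {ν : σ →₀ ℕ} (hν : n < ν i + μ i) : coeff (ν + μ) f = coeff ν f :=
  sub_eq_zero.mp <| (coeff_add_mul_one_sub_monomial f ν μ).symm.trans (h _ hν)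

end MvPowerSeries

theorem degreeOfLE_GORNum : DegreeOfLE 0 12 GORNum := by
  have hq (k : ℕ) : DegreeOfLE 0 0 (qVar ^ k) := degreeOfLE_X_pow_of_ne (by decide) k
  have ht (k : ℕ) : DegreeOfLE 0 k (tVar ^ k) := degreeOfLE_X_pow_self k
  have hfactor (k l : ℕ) : DegreeOfLE 0 k (1 + tVar ^ k * qVar ^ l) :=
    (degreeOfLE_one.mono k.zero_le).add ((ht k).mul (hq l))
  exact (((degreeOfLE_one.add (hq 2)).mul (hfactor 2 4)).mul (hfactor 3 6)).mul (hfactor 7 10)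

theorem degreeOfLE_geomSum_t6q8 :
    DegreeOfLE 0 36 (∑ k ∈ Finset.range 7, (tVar ^ 6 * qVar ^ 8) ^ k) :=
  degreeOfLE_sum fun k hk =>
    ((degreeOfLE_X_pow_self 6).mul (degreeOfLE_X_pow_of_ne (by decide) 8)).pow k
      |>.mono (by have := Finset.mem_range.mp hk; omega)

theorem stmt7 (P' : MvPowerSeries (Fin 2) ℚ)
    (hP' : P' * (1 - tVar ^ 4 * qVar ^ 6)
      = GORNum * (∑ i ∈ Finset.range 7, (tVar ^ 6 * qVar ^ 8) ^ i))
    (a b : ℕ) (ha : a ≥ 45) :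
    cf a b P' = cf (a + 4) (b + 6) P' := by
  have hmon : tVar ^ 4 * qVar ^ 6 =
      monomial (Finsupp.single (0 : Fin 2) 4 + Finsupp.single 1 6) 1 := by
    rw [tVar, qVar, X_pow_eq, X_pow_eq, monomial_mul_monomial, one_mul]
  have hdeg : DegreeOfLE 0 48 (P' * (1 - tVar ^ 4 * qVar ^ 6)) :=
    hP' ▸ degreeOfLE_GORNum.mul degreeOfLE_geomSum_t6q8
  rw [hmon] at hdeg
  have hexp : Finsupp.single (0 : Fin 2) (a + 4) + Finsupp.single 1 (b + 6)
      = (Finsupp.single 0 a + Finsupp.single 1 b) + (Finsupp.single 0 4 + Finsupp.single 1 6) := by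
    simp only [Finsupp.single_add]
    abel
  unfold cf
  rw [hexp, coeff_add_eq_of_degreeOfLE_mul_one_sub_monomial hdeg (by simpa using (by omega : 48 < a + 4))]
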